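/- Let B = {m₁,…,m_r} be a set of monomials of R = ℝ[x₁,…,xₙ] connected to 1 and σ a linear form defined on ⟨B⁺·B⁺⟩. Suppose P = {p₁,…,p_r} is a family of polynomials with ⟨P⟩ = ⟨B⟩, σ(pᵢ·pⱼ) = 0 for i ≠ j, and σ(pⱼ²) ≠ 0 for all j. For each monomial m'ᵢ in ∂B = {m'₁,…,m'_l}, set ρᵢ = m'ᵢ − ∑_{j=1}^r (σ(m'ᵢ·pⱼ)/σ(pⱼ²)) pⱼ, and assume σ(ρᵢ·ρⱼ) = 0 for all 1 ≤ i, j ≤ l. Then σ coincides on ⟨B⁺·B⁺⟩ with a linear form σ̃ on R such that: (1) the Hankel operator H_{σ̃} has rank r; (2) the images of B and of P are bases of the quotient A_{σ̃} = R/ker H_{σ̃}; (3) the ideal ker H_{σ̃} is generated by ρ₁,…,ρ_l; and (4) the matrix of multiplication by x_k on A_{σ̃} in the basis P is M_k = (σ(x_k·pᵢ·pⱼ)/σ(pⱼ²))_{1 ≤ i, j ≤ r}. -/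

import Mathlib

open MvPolynomial Matrix

/-- The Hankel operator associated to a linear form `σ` on `ℝ[x₁,…,xₙ]`:
it sends `p` to the linear form `q ↦ σ (p * q)`. -/
noncomputable def hankel {n : ℕ} (σ : Module.Dual ℝ (MvPolynomial (Fin n) ℝ)) :
    MvPolynomial (Fin n) ℝ →ₗ[ℝ] Module.Dual ℝ (MvPolynomial (Fin n) ℝ) :=
  (LinearMap.llcomp ℝ (MvPolynomial (Fin n) ℝ) (MvPolynomial (Fin n) ℝ) ℝ σ).comp
    (LinearMap.mul ℝ (MvPolynomial (Fin n) ℝ))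

/-- A set `B` of monomials (identified with their exponent multi-indices) is
connected to 1 if it contains `1 = x^0` and every `m ≠ 1` in `B` is `xᵢ·m'`
for some variable `xᵢ` and some `m' ∈ B`. -/
def connectedTo1 {n : ℕ} (B : Finset (Fin n →₀ ℕ)) : Prop :=
  (0 : Fin n →₀ ℕ) ∈ B ∧ ∀ α ∈ B, α ≠ 0 → ∃ i : Fin n, ∃ β ∈ B, α = β + Finsupp.single i 1

/-- `B⁺ = B ∪ x₁B ∪ ⋯ ∪ xₙB` on the level of exponents. -/
noncomputable def plusSet {n : ℕ} (B : Finset (Fin n →₀ ℕ)) : Finset (Fin n →₀ ℕ) :=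
  B ∪ Finset.univ.biUnion fun i : Fin n => B.image (· + Finsupp.single i 1)

/-- `∂B = B⁺ \ B` on the level of exponents. -/
noncomputable def borderSet {n : ℕ} (B : Finset (Fin n →₀ ℕ)) : Finset (Fin n →₀ ℕ) :=
  plusSet B \ B

/-- The product set `B·B' = {m·m' : m ∈ B, m' ∈ B'}` on the level of exponents. -/
noncomputable def mulSet {n : ℕ} (B B' : Finset (Fin n →₀ ℕ)) : Finset (Fin n →₀ ℕ) :=
  (B ×ˢ B').image fun p => p.1 + p.2

/-- The span `⟨B⟩` of a set of monomials. -/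
noncomputable def spanMon {n : ℕ} (B : Finset (Fin n →₀ ℕ)) :
    Submodule ℝ (MvPolynomial (Fin n) ℝ) :=
  Submodule.span ℝ ((fun α => (monomial α (1 : ℝ))) '' (B : Set (Fin n →₀ ℕ)))

/-!
Let `V = ⟨B⟩ = ⟨P⟩`. Since `P` is `σ`-orthogonal with `σ(pⱼ²) ≠ 0`, the map
`f ↦ ∑ⱼ σ(f pⱼ)/σ(pⱼ²) pⱼ` is the `σ`-orthogonal projection of `R` onto `V`, and
`ρᵢ = m'ᵢ - proj m'ᵢ`. The operators `Mₖ v = proj (xₖ v)` on `V` are `σ`-self-adjoint, and since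
the `ρᵢ` are orthogonal to `V` and to each other, `σ(Mₖ Mₗ u · v) = σ(xₖ xₗ u v)`; as `σ` is
nondegenerate on `V`, the `Mₖ` commute. Hence `N q := q(M₁, …, Mₙ) 1` is well defined, and
`σ̃ := σ ∘ N` satisfies `σ̃(q q') = σ(N q · N q')`. Connectedness of `B` gives `N = id` on `V`, so
`ker H_σ̃ = ker N` is a complement of `V`. Finally `N` kills the `ρᵢ` while `q - N q ∈ (ρ)` by
induction on `q`, so `ker N = (ρ)`; monomials of `B⁺` and the `xₖ pᵢ` differ from their
projections by elements of `⟨ρ⟩`, which gives the agreement on `B⁺·B⁺` and the matrices `Mₖ`.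
-/

open Submodule

section SubmoduleMul

variable {K A : Type*} [CommRing K] [CommRing A] [Algebra K A] (σ : Module.Dual K A)

theorem span_mul_span_le_ker_iff {s t : Set A} :
    span K s * span K t ≤ LinearMap.ker σ ↔ ∀ x ∈ s, ∀ y ∈ t, σ (x * y) = 0 := by
  simp only [span_mul_span, span_le, Set.mul_subset_iff, SetLike.mem_coe, LinearMap.mem_ker]

theorem map_mul_eq_of_sub_mem {V W : Submodule K A} (hVW : V * W ≤ LinearMap.ker σ)
    (hWW : W * W ≤ LinearMap.ker σ) {a b f g : A} (ha : a ∈ V) (hb : b ∈ V)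
    (hf : f - a ∈ W) (hg : g - b ∈ W) : σ (f * g) = σ (a * b) := by
  have h₁ : σ (a * (g - b)) = 0 := hVW (mul_mem_mul ha hg)
  have h₂ : σ (b * (f - a)) = 0 := hVW (mul_mem_mul hb hf)
  have h₃ : σ ((f - a) * (g - b)) = 0 := hWW (mul_mem_mul hf hg)
  calc σ (f * g) = σ (a * b + a * (g - b) + b * (f - a) + (f - a) * (g - b)) := by ring_nf
    _ = σ (a * b) := by simp only [map_add, h₁, h₂, h₃, add_zero]

end SubmoduleMul

theorem hankel_apply {n : ℕ} (σ : Module.Dual ℝ (MvPolynomial (Fin n) ℝ))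
    (q q' : MvPolynomial (Fin n) ℝ) : hankel σ q q' = σ (q * q') := rfl

universe u in
theorem LinearMap.rank_eq_of_isCompl_ker {R : Type*} {M N : Type u} [Ring R] [AddCommGroup M]
    [Module R M] [AddCommGroup N] [Module R N] (f : M →ₗ[R] N) {V : Submodule R M}
    (h : IsCompl V (LinearMap.ker f)) : f.rank = Module.rank R V :=
  (f.quotKerEquivRange.symm.trans (Submodule.quotientEquivOfIsCompl _ _ h.symm)).rank_eq

section OrthogonalProjection

variable {K A ι : Type*} [Field K] [CommRing A] [Algebra K A] [Fintype ι]
  (σ : Module.Dual K A) (p : ι → A)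

structure IsOrthogonalFamily : Prop where
  map_mul_eq_zero : ∀ i j, i ≠ j → σ (p i * p j) = 0
  map_sq_ne_zero : ∀ j, σ (p j ^ 2) ≠ 0

noncomputable def orthProj : A →ₗ[K] A :=
  ∑ j, ((σ (p j ^ 2))⁻¹ • σ ∘ₗ LinearMap.mulRight K (p j)).smulRight (p j)

theorem orthProj_apply (f : A) : orthProj σ p f = ∑ j, (σ (f * p j) / σ (p j ^ 2)) • p j := by
  simp [orthProj, div_eq_inv_mul]

theorem orthProj_mem (f : A) : orthProj σ p f ∈ span K (Set.range p) := by
  rw [orthProj_apply]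
  exact sum_mem fun j _ => smul_mem _ _ (subset_span ⟨j, rfl⟩)

noncomputable def mulOp (a : A) : span K (Set.range p) →ₗ[K] span K (Set.range p) :=
  (orthProj σ p ∘ₗ LinearMap.mulLeft K a ∘ₗ (span K (Set.range p)).subtype).codRestrict _
    fun _ => orthProj_mem σ p _

theorem coe_mulOp (a : A) (u : span K (Set.range p)) :
    (mulOp σ p a u : A) = orthProj σ p (a * u) := rfl

variable {σ p}

namespace IsOrthogonalFamily

theorem map_orthProj_mul (hp : IsOrthogonalFamily σ p) (f : A) (j : ι) :
    σ (orthProj σ p f * p j) = σ (f * p j) := by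
  rw [orthProj_apply, Finset.sum_mul, map_sum, Finset.sum_eq_single j]
  · rw [smul_mul_assoc, map_smul, ← sq, smul_eq_mul, div_mul_cancel₀ _ (hp.map_sq_ne_zero j)]
  · intro l _ hl
    rw [smul_mul_assoc, map_smul, hp.map_mul_eq_zero l j hl, smul_zero]
  · simp

theorem map_orthProj_mul_of_mem (hp : IsOrthogonalFamily σ p) (f : A) {v : A}
    (hv : v ∈ span K (Set.range p)) : σ (orthProj σ p f * v) = σ (f * v) := by
  have : Set.EqOn (σ ∘ₗ LinearMap.mulLeft K (orthProj σ p f)) (σ ∘ₗ LinearMap.mulLeft K f)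
      (Set.range p) := by
    rintro _ ⟨j, rfl⟩
    exact hp.map_orthProj_mul f j
  exact LinearMap.eqOn_span' this hv

theorem map_mul_sub_orthProj (hp : IsOrthogonalFamily σ p) (f : A) {v : A}
    (hv : v ∈ span K (Set.range p)) : σ (v * (f - orthProj σ p f)) = 0 := by
  rw [mul_sub, map_sub, mul_comm, ← hp.map_orthProj_mul_of_mem f hv, mul_comm, sub_self]

theorem orthProj_self (hp : IsOrthogonalFamily σ p) (i : ι) : orthProj σ p (p i) = p i := by
  rw [orthProj_apply, Finset.sum_eq_single i]
  · rw [← sq, div_self (hp.map_sq_ne_zero i), one_smul]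
  · intro j _ hj
    rw [hp.map_mul_eq_zero i j hj.symm, zero_div, zero_smul]
  · simp

theorem orthProj_of_mem (hp : IsOrthogonalFamily σ p) {v : A} (hv : v ∈ span K (Set.range p)) :
    orthProj σ p v = v := by
  have : Set.EqOn (orthProj σ p) (LinearMap.id : A →ₗ[K] A) (Set.range p) := by
    rintro _ ⟨i, rfl⟩
    exact hp.orthProj_self i
  exact LinearMap.eqOn_span' this hv

theorem eq_zero_of_forall_map_mul_eq_zero (hp : IsOrthogonalFamily σ p) {v : A}
    (hv : v ∈ span K (Set.range p)) (h : ∀ j, σ (v * p j) = 0) : v = 0 := by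
  rw [← hp.orthProj_of_mem hv, orthProj_apply]
  simp [h]

theorem map_mulOp_mul (hp : IsOrthogonalFamily σ p) (a : A) (u v : span K (Set.range p)) :
    σ (mulOp σ p a u * v) = σ (a * u * v) :=
  hp.map_orthProj_mul_of_mem _ v.2

theorem map_mulOp_mulOp_mul (hp : IsOrthogonalFamily σ p) {W : Submodule K A}
    (hVW : span K (Set.range p) * W ≤ LinearMap.ker σ) (hWW : W * W ≤ LinearMap.ker σ)
    {a b : A} (ha : ∀ u ∈ span K (Set.range p), a * u - orthProj σ p (a * u) ∈ W)
    (hb : ∀ u ∈ span K (Set.range p), b * u - orthProj σ p (b * u) ∈ W)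
    (u v : span K (Set.range p)) :
    σ (mulOp σ p a (mulOp σ p b u) * v) = σ (a * b * u * v) := by
  calc σ (mulOp σ p a (mulOp σ p b u) * v)
      = σ (orthProj σ p (a * v) * mulOp σ p b u) := by
        rw [hp.map_mulOp_mul, hp.map_orthProj_mul_of_mem _ (mulOp σ p b u).2]; ring_nf
    _ = σ ((a * v) * (b * u)) :=
        (map_mul_eq_of_sub_mem σ hVW hWW (orthProj_mem σ p _) (orthProj_mem σ p _)
          (ha v v.2) (hb u u.2)).symm
    _ = σ (a * b * u * v) := by ring_nf

theorem mulOp_commute (hp : IsOrthogonalFamily σ p) {W : Submodule K A}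
    (hVW : span K (Set.range p) * W ≤ LinearMap.ker σ) (hWW : W * W ≤ LinearMap.ker σ)
    {a b : A} (ha : ∀ u ∈ span K (Set.range p), a * u - orthProj σ p (a * u) ∈ W)
    (hb : ∀ u ∈ span K (Set.range p), b * u - orthProj σ p (b * u) ∈ W) :
    Commute (mulOp σ p a) (mulOp σ p b) := by
  ext u
  rw [← sub_eq_zero, ← AddSubgroupClass.coe_sub]
  refine hp.eq_zero_of_forall_map_mul_eq_zero (coe_mem _) fun j => ?_
  have hj : p j ∈ span K (Set.range p) := subset_span (Set.mem_range_self j)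
  rw [AddSubgroupClass.coe_sub, sub_mul, map_sub, Module.End.mul_apply, Module.End.mul_apply,
    hp.map_mulOp_mulOp_mul hVW hWW ha hb u ⟨p j, hj⟩,
    hp.map_mulOp_mulOp_mul hVW hWW hb ha u ⟨p j, hj⟩, mul_comm a b, sub_self]

end IsOrthogonalFamily

end OrthogonalProjection

section CommutingEndomorphisms

open scoped IsMulCommutative

variable {R M κ : Type*} [CommRing R] [AddCommGroup M] [Module R M]

noncomputable def aevalOfCommute (f : κ → Module.End R M) (hf : ∀ k l, Commute (f k) (f l)) :
    MvPolynomial κ R →ₐ[R] Module.End R M :=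
  haveI := Algebra.isMulCommutative_adjoin R (s := Set.range f) <| by
    rintro _ ⟨k, rfl⟩ _ ⟨l, rfl⟩
    exact hf k l
  (Algebra.adjoin R (Set.range f)).val.comp
    (MvPolynomial.aeval fun k => ⟨f k, Algebra.subset_adjoin ⟨k, rfl⟩⟩)

theorem aevalOfCommute_X (f : κ → Module.End R M) (hf : ∀ k l, Commute (f k) (f l)) (k : κ) :
    aevalOfCommute f hf (X k) = f k := by
  simp [aevalOfCommute]

end CommutingEndomorphisms

section NormalForm

variable {K ι κ : Type*} [Field K] [Fintype ι] {σ : Module.Dual K (MvPolynomial κ K)}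
  {p : ι → MvPolynomial κ K} (hc : ∀ k l, Commute (mulOp σ p (X k)) (mulOp σ p (X l)))
  (h1 : (1 : MvPolynomial κ K) ∈ span K (Set.range p))

noncomputable def normalForm : MvPolynomial κ K →ₗ[K] span K (Set.range p) :=
  LinearMap.applyₗ (⟨1, h1⟩ : span K (Set.range p)) ∘ₗ
    (aevalOfCommute (fun k => mulOp σ p (X k)) hc).toLinearMap

theorem normalForm_one : normalForm hc h1 1 = ⟨1, h1⟩ := by
  simp [normalForm]

theorem normalForm_mul (f q : MvPolynomial κ K) :
    normalForm hc h1 (f * q) = aevalOfCommute _ hc f (normalForm hc h1 q) := by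
  simp [normalForm]

theorem normalForm_X_mul (k : κ) (q : MvPolynomial κ K) :
    normalForm hc h1 (X k * q) = mulOp σ p (X k) (normalForm hc h1 q) := by
  rw [normalForm_mul, aevalOfCommute_X]

theorem normalForm_X_mul_of_normalForm_eq {v : MvPolynomial κ K}
    (hv : v ∈ span K (Set.range p)) (hNv : (normalForm hc h1 v : MvPolynomial κ K) = v)
    (k : κ) : (normalForm hc h1 (X k * v) : MvPolynomial κ K) = orthProj σ p (X k * v) := by
  rw [normalForm_X_mul, show normalForm hc h1 v = ⟨v, hv⟩ from Subtype.ext hNv, coe_mulOp]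

theorem IsOrthogonalFamily.map_aevalOfCommute_mul (hp : IsOrthogonalFamily σ p)
    (q : MvPolynomial κ K) (u v : span K (Set.range p)) :
    σ (aevalOfCommute _ hc q u * v) = σ (u * aevalOfCommute _ hc q v) := by
  induction q using MvPolynomial.induction_on generalizing u v with
  | C c => simp [mul_comm]
  | add q q' hq hq' => simp [add_mul, mul_add, hq, hq']
  | mul_X q k hq =>
    have hX : ∀ w, aevalOfCommute _ hc (q * X k) w = aevalOfCommute _ hc q (mulOp σ p (X k) w) :=
      fun w => by rw [_root_.map_mul, Module.End.mul_apply, aevalOfCommute_X]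
    have hX' : ∀ w, aevalOfCommute _ hc (q * X k) w = mulOp σ p (X k) (aevalOfCommute _ hc q w) :=
      fun w => by rw [mul_comm, _root_.map_mul, Module.End.mul_apply, aevalOfCommute_X]
    rw [hX, hq, hX', mul_comm (u : MvPolynomial κ K), hp.map_mulOp_mul, hp.map_mulOp_mul]
    ring_nf

theorem IsOrthogonalFamily.map_normalForm_mul (hp : IsOrthogonalFamily σ p)
    (q q' : MvPolynomial κ K) :
    σ (normalForm hc h1 (q * q')) = σ (normalForm hc h1 q * normalForm hc h1 q') := by
  calc σ (normalForm hc h1 (q * q'))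
      = σ (aevalOfCommute _ hc q (normalForm hc h1 q') * (⟨1, h1⟩ : span K (Set.range p))) := by
        rw [normalForm_mul, coe_mk, mul_one]
    _ = σ (normalForm hc h1 q' * normalForm hc h1 q) := hp.map_aevalOfCommute_mul hc q _ _
    _ = σ (normalForm hc h1 q * normalForm hc h1 q') := by rw [mul_comm]

end NormalForm

section BorderSets

variable {n : ℕ} {B : Finset (Fin n →₀ ℕ)}

theorem monomial_mem_spanMon {α : Fin n →₀ ℕ} (hα : α ∈ B) : monomial α (1 : ℝ) ∈ spanMon B :=
  subset_span ⟨α, hα, rfl⟩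

theorem add_single_mem_plusSet {β : Fin n →₀ ℕ} (hβ : β ∈ B) (k : Fin n) :
    β + Finsupp.single k 1 ∈ plusSet B :=
  Finset.mem_union_right _ <|
    Finset.mem_biUnion.2 ⟨k, Finset.mem_univ k, Finset.mem_image_of_mem _ hβ⟩

theorem exists_add_single_of_mem_borderSet {γ : Fin n →₀ ℕ} (hγ : γ ∈ borderSet B) :
    ∃ k, ∃ β ∈ B, γ = β + Finsupp.single k 1 := by
  obtain ⟨hγ, hγB⟩ := Finset.mem_sdiff.1 hγ
  obtain hγ | hγ := Finset.mem_union.1 hγ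
  · exact absurd hγ hγB
  · obtain ⟨k, -, hk⟩ := Finset.mem_biUnion.1 hγ
    obtain ⟨β, hβ, rfl⟩ := Finset.mem_image.1 hk
    exact ⟨k, β, hβ, rfl⟩

theorem X_mul_monomial_one (k : Fin n) (β : Fin n →₀ ℕ) :
    X k * monomial β (1 : ℝ) = monomial (β + Finsupp.single k 1) 1 := by
  rw [add_comm, monomial_single_add, pow_one]

theorem one_mem_span_of_connectedTo1 {ι : Type*} {p : ι → MvPolynomial (Fin n) ℝ}
    (hB : connectedTo1 B) (hspan : span ℝ (Set.range p) = spanMon B) :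
    1 ∈ span ℝ (Set.range p) := by
  rw [hspan, one_def]
  exact monomial_mem_spanMon hB.1

theorem rank_spanMon (B : Finset (Fin n →₀ ℕ)) : Module.rank ℝ (spanMon B) = B.card := by
  have hli : LinearIndependent ℝ
      fun α : (B : Set (Fin n →₀ ℕ)) => monomial (α : Fin n →₀ ℕ) (1 : ℝ) := by
    simpa [Function.comp_def] using
      (basisMonomials (Fin n) ℝ).linearIndependent.comp _ Subtype.val_injective
  rw [spanMon, Set.image_eq_range, rank_span hli, Cardinal.mk_range_eq _ hli.injective,
    Cardinal.mk_fintype]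
  simp

end BorderSets

section BorderBasis

variable {n : ℕ} {ι : Type*} [Fintype ι] {σ : Module.Dual ℝ (MvPolynomial (Fin n) ℝ)}
  {p : ι → MvPolynomial (Fin n) ℝ} {B : Finset (Fin n →₀ ℕ)}
  (hc : ∀ k l, Commute (mulOp σ p (X k)) (mulOp σ p (X l)))
  (h1 : (1 : MvPolynomial (Fin n) ℝ) ∈ span ℝ (Set.range p))

variable (σ p B) in
noncomputable def borderRel (m : borderSet B) : MvPolynomial (Fin n) ℝ :=
  monomial (m : Fin n →₀ ℕ) 1 - orthProj σ p (monomial m 1)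

namespace IsOrthogonalFamily

theorem monomial_sub_orthProj_mem (hp : IsOrthogonalFamily σ p)
    (hspan : span ℝ (Set.range p) = spanMon B) {γ : Fin n →₀ ℕ} (hγ : γ ∈ plusSet B) :
    monomial γ 1 - orthProj σ p (monomial γ 1) ∈ span ℝ (Set.range (borderRel σ p B)) := by
  by_cases hγB : γ ∈ B
  · rw [hp.orthProj_of_mem (hspan ▸ monomial_mem_spanMon hγB), sub_self]
    exact zero_mem _
  · exact subset_span ⟨⟨γ, Finset.mem_sdiff.2 ⟨hγ, hγB⟩⟩, rfl⟩

theorem X_mul_sub_orthProj_mem (hp : IsOrthogonalFamily σ p)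
    (hspan : span ℝ (Set.range p) = spanMon B) (k : Fin n) {v : MvPolynomial (Fin n) ℝ}
    (hv : v ∈ span ℝ (Set.range p)) :
    X k * v - orthProj σ p (X k * v) ∈ span ℝ (Set.range (borderRel σ p B)) := by
  let L := (LinearMap.id - orthProj σ p) ∘ₗ LinearMap.mulLeft ℝ (X k : MvPolynomial (Fin n) ℝ)
  have hle : spanMon B ≤ (span ℝ (Set.range (borderRel σ p B))).comap L := by
    refine span_le.2 ?_
    rintro _ ⟨β, hβ, rfl⟩
    simpa [L, X_mul_monomial_one] using
      hp.monomial_sub_orthProj_mem hspan (add_single_mem_plusSet hβ k)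
  simpa [L] using hle (hspan ▸ hv)

theorem span_mul_span_borderRel_le (hp : IsOrthogonalFamily σ p) :
    span ℝ (Set.range p) * span ℝ (Set.range (borderRel σ p B)) ≤ LinearMap.ker σ := by
  rw [span_mul_span_le_ker_iff]
  rintro _ ⟨j, rfl⟩ _ ⟨m, rfl⟩
  exact hp.map_mul_sub_orthProj _ (subset_span ⟨j, rfl⟩)

theorem mulOp_X_commute (hp : IsOrthogonalFamily σ p) (hspan : span ℝ (Set.range p) = spanMon B)
    (hWW : span ℝ (Set.range (borderRel σ p B)) *
      span ℝ (Set.range (borderRel σ p B)) ≤ LinearMap.ker σ)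
    (k l : Fin n) : Commute (mulOp σ p (X k)) (mulOp σ p (X l)) :=
  hp.mulOp_commute hp.span_mul_span_borderRel_le hWW
    (fun _ => hp.X_mul_sub_orthProj_mem hspan k) (fun _ => hp.X_mul_sub_orthProj_mem hspan l)

theorem normalForm_monomial (hp : IsOrthogonalFamily σ p)
    (hspan : span ℝ (Set.range p) = spanMon B) (hB : connectedTo1 B) {α : Fin n →₀ ℕ}
    (hα : α ∈ B) : (normalForm hc h1 (monomial α 1) : MvPolynomial (Fin n) ℝ) = monomial α 1 := by
  induction α using WellFoundedLT.induction with
  | _ α ih =>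
    obtain rfl | hα0 := eq_or_ne α 0
    · rw [← one_def, normalForm_one]
    obtain ⟨k, β, hβ, rfl⟩ := hB.2 α hα hα0
    have hβα : β < β + Finsupp.single k 1 := lt_add_of_pos_right β (pos_iff_ne_zero.2 (by simp))
    have hXβ : X k * monomial β 1 ∈ span ℝ (Set.range p) := by
      rw [X_mul_monomial_one, hspan]
      exact monomial_mem_spanMon hα
    rw [← X_mul_monomial_one, normalForm_X_mul_of_normalForm_eq hc h1
      (hspan ▸ monomial_mem_spanMon hβ) (ih β hβα hβ), hp.orthProj_of_mem hXβ]

theorem normalForm_of_mem (hp : IsOrthogonalFamily σ p)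
    (hspan : span ℝ (Set.range p) = spanMon B) (hB : connectedTo1 B) {v : MvPolynomial (Fin n) ℝ}
    (hv : v ∈ span ℝ (Set.range p)) : (normalForm hc h1 v : MvPolynomial (Fin n) ℝ) = v := by
  have : Set.EqOn ((span ℝ (Set.range p)).subtype ∘ₗ normalForm hc h1)
      (LinearMap.id : MvPolynomial (Fin n) ℝ →ₗ[ℝ] _)
      ((fun α => monomial α (1 : ℝ)) '' (B : Set (Fin n →₀ ℕ))) := by
    rintro _ ⟨α, hα, rfl⟩
    exact hp.normalForm_monomial hc h1 hspan hB hα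
  rw [hspan, spanMon] at hv
  exact LinearMap.eqOn_span' this hv

theorem normalForm_borderRel (hp : IsOrthogonalFamily σ p)
    (hspan : span ℝ (Set.range p) = spanMon B) (hB : connectedTo1 B) (m : borderSet B) :
    normalForm hc h1 (borderRel σ p B m) = 0 := by
  obtain ⟨k, β, hβ, hm⟩ := exists_add_single_of_mem_borderSet m.2
  have hβV : monomial β 1 ∈ span ℝ (Set.range p) := hspan ▸ monomial_mem_spanMon hβ
  apply Subtype.ext
  rw [borderRel, map_sub, AddSubgroupClass.coe_sub, hm, ← X_mul_monomial_one,
    normalForm_X_mul_of_normalForm_eq hc h1 hβV (hp.normalForm_of_mem hc h1 hspan hB hβV),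
    hp.normalForm_of_mem hc h1 hspan hB (orthProj_mem σ p _), sub_self, ZeroMemClass.coe_zero]

theorem span_borderRel_le_ker_normalForm (hp : IsOrthogonalFamily σ p)
    (hspan : span ℝ (Set.range p) = spanMon B) (hB : connectedTo1 B) :
    (Ideal.span (Set.range (borderRel σ p B))).restrictScalars ℝ ≤
      LinearMap.ker (normalForm hc h1) := by
  intro q hq
  induction hq using Submodule.span_induction with
  | mem x hx =>
    obtain ⟨m, rfl⟩ := hx
    exact hp.normalForm_borderRel hc h1 hspan hB m
  | zero => exact zero_mem _
  | add x y _ _ hx hy => exact add_mem hx hy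
  | smul a x _ hx =>
    rw [LinearMap.mem_ker, smul_eq_mul, normalForm_mul, LinearMap.mem_ker.1 hx, map_zero]

theorem sub_normalForm_mem (hp : IsOrthogonalFamily σ p)
    (hspan : span ℝ (Set.range p) = spanMon B) (q : MvPolynomial (Fin n) ℝ) :
    q - normalForm hc h1 q ∈ Ideal.span (Set.range (borderRel σ p B)) := by
  induction q using MvPolynomial.induction_on with
  | C a =>
    rw [C_eq_smul_one, map_smul, normalForm_one, Submodule.coe_smul, coe_mk, sub_self]
    exact zero_mem _
  | add q q' hq hq' =>
    rw [map_add, Submodule.coe_add, add_sub_add_comm]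
    exact add_mem hq hq'
  | mul_X q k hq =>
    have hW := hp.X_mul_sub_orthProj_mem hspan k (normalForm hc h1 q).2
    set v : MvPolynomial (Fin n) ℝ := ↑(normalForm hc h1 q)
    rw [mul_comm, normalForm_X_mul, coe_mulOp, show X k * q - orthProj σ p (X k * v) =
        X k * (q - v) + (X k * v - orthProj σ p (X k * v)) by ring]
    exact add_mem (Ideal.mul_mem_left _ _ hq) (span_le_restrictScalars ℝ _ _ hW)

theorem ker_normalForm (hp : IsOrthogonalFamily σ p)
    (hspan : span ℝ (Set.range p) = spanMon B) (hB : connectedTo1 B) :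
    LinearMap.ker (normalForm hc h1) =
      (Ideal.span (Set.range (borderRel σ p B))).restrictScalars ℝ := by
  refine le_antisymm (fun q hq => ?_) (hp.span_borderRel_le_ker_normalForm hc h1 hspan hB)
  simpa [LinearMap.mem_ker.1 hq] using hp.sub_normalForm_mem hc h1 hspan q

theorem normalForm_monomial_of_mem_plusSet (hp : IsOrthogonalFamily σ p)
    (hspan : span ℝ (Set.range p) = spanMon B) (hB : connectedTo1 B) {γ : Fin n →₀ ℕ}
    (hγ : γ ∈ plusSet B) :
    (normalForm hc h1 (monomial γ 1) : MvPolynomial (Fin n) ℝ) = orthProj σ p (monomial γ 1) := by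
  have h := hp.span_borderRel_le_ker_normalForm hc h1 hspan hB <|
    span_le_restrictScalars ℝ _ _ (hp.monomial_sub_orthProj_mem hspan hγ)
  rw [LinearMap.mem_ker, map_sub, sub_eq_zero] at h
  rw [h, hp.normalForm_of_mem hc h1 hspan hB (orthProj_mem σ p _)]

theorem map_normalForm_monomial_of_mem_mulSet (hp : IsOrthogonalFamily σ p)
    (hspan : span ℝ (Set.range p) = spanMon B) (hB : connectedTo1 B)
    (hWW : span ℝ (Set.range (borderRel σ p B)) *
      span ℝ (Set.range (borderRel σ p B)) ≤ LinearMap.ker σ)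
    {α : Fin n →₀ ℕ} (hα : α ∈ mulSet (plusSet B) (plusSet B)) :
    σ (normalForm hc h1 (monomial α 1)) = σ (monomial α 1) := by
  obtain ⟨⟨γ, δ⟩, hγδ, rfl⟩ := Finset.mem_image.1 hα
  obtain ⟨hγ, hδ⟩ := Finset.mem_product.1 hγδ
  rw [← one_mul (1 : ℝ), ← monomial_mul, hp.map_normalForm_mul,
    hp.normalForm_monomial_of_mem_plusSet hc h1 hspan hB hγ,
    hp.normalForm_monomial_of_mem_plusSet hc h1 hspan hB hδ]
  exact (map_mul_eq_of_sub_mem σ hp.span_mul_span_borderRel_le hWW (orthProj_mem σ p _)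
    (orthProj_mem σ p _) (hp.monomial_sub_orthProj_mem hspan hγ)
    (hp.monomial_sub_orthProj_mem hspan hδ)).symm

theorem ker_hankel_normalForm (hp : IsOrthogonalFamily σ p)
    (hspan : span ℝ (Set.range p) = spanMon B) (hB : connectedTo1 B) :
    LinearMap.ker (hankel (σ ∘ₗ (span ℝ (Set.range p)).subtype ∘ₗ normalForm hc h1)) =
      LinearMap.ker (normalForm hc h1) := by
  ext q
  simp only [LinearMap.mem_ker]
  constructor
  · intro h
    refine Subtype.ext (hp.eq_zero_of_forall_map_mul_eq_zero (coe_mem _) fun j => ?_)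
    have hj := LinearMap.congr_fun h (p j)
    rwa [hankel_apply, LinearMap.comp_apply, LinearMap.comp_apply, Submodule.subtype_apply,
      hp.map_normalForm_mul, hp.normalForm_of_mem hc h1 hspan hB (subset_span ⟨j, rfl⟩)] at hj
  · intro h
    refine LinearMap.ext fun q' => ?_
    rw [hankel_apply, LinearMap.comp_apply, LinearMap.comp_apply, Submodule.subtype_apply,
      hp.map_normalForm_mul, h]
    simp

end IsOrthogonalFamily

end BorderBasis

/-- given an orthogonal family `P` spanning `⟨B⟩` and border relations `ρᵢ`
orthogonal to each other, `σ` coincides on `⟨B⁺·B⁺⟩` with a linear form `σ̃` whose Hankel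
operator has rank `r = |B|`, `B` and `P` are bases of `R/ker H_{σ̃}` (they span complements
of the kernel), `ker H_{σ̃}` is the ideal generated by the `ρᵢ`, and the matrix of
multiplication by `x_k` in the basis `P` is `(σ(x_k pᵢ pⱼ)/σ(pⱼ²))_{i,j}`. -/
theorem stmt9 (n : ℕ) (B : Finset (Fin n →₀ ℕ)) (hB : connectedTo1 B)
    (σ : Module.Dual ℝ (MvPolynomial (Fin n) ℝ))
    (p : Fin B.card → MvPolynomial (Fin n) ℝ)
    (hspan : Submodule.span ℝ (Set.range p) = spanMon B)
    (horth : ∀ i j, i ≠ j → σ (p i * p j) = 0)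
    (hnz : ∀ j, σ (p j ^ 2) ≠ 0)
    (ρ : ↥(borderSet B) → MvPolynomial (Fin n) ℝ)
    (hρ : ∀ m : ↥(borderSet B), ρ m = monomial (m : Fin n →₀ ℕ) 1 -
      ∑ j, (σ (monomial (m : Fin n →₀ ℕ) 1 * p j) / σ (p j ^ 2)) • p j)
    (horthρ : ∀ m m' : ↥(borderSet B), σ (ρ m * ρ m') = 0) :
    ∃ σt : Module.Dual ℝ (MvPolynomial (Fin n) ℝ),
      (∀ α ∈ mulSet (plusSet B) (plusSet B), σt (monomial α 1) = σ (monomial α 1)) ∧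
      LinearMap.rank (hankel σt) = (B.card : Cardinal) ∧
      IsCompl (spanMon B) (LinearMap.ker (hankel σt)) ∧
      IsCompl (Submodule.span ℝ (Set.range p)) (LinearMap.ker (hankel σt)) ∧
      LinearMap.ker (hankel σt) = Submodule.restrictScalars ℝ (Ideal.span (Set.range ρ)) ∧
      ∀ (k : Fin n) (i : Fin B.card),
        X k * p i - ∑ j, (σ (X k * p i * p j) / σ (p j ^ 2)) • p j
          ∈ LinearMap.ker (hankel σt) := by
  have hp : IsOrthogonalFamily σ p := ⟨horth, hnz⟩
  obtain rfl : ρ = borderRel σ p B :=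
    funext fun m => by rw [hρ, borderRel, orthProj_apply]
  have hWW : span ℝ (Set.range (borderRel σ p B)) *
      span ℝ (Set.range (borderRel σ p B)) ≤ LinearMap.ker σ := by
    rw [span_mul_span_le_ker_iff]
    rintro _ ⟨m, rfl⟩ _ ⟨m', rfl⟩
    exact horthρ m m'
  have hc := hp.mulOp_X_commute hspan hWW
  have h1 := one_mem_span_of_connectedTo1 hB hspan
  have hker := hp.ker_hankel_normalForm hc h1 hspan hB
  have hcompl : IsCompl (span ℝ (Set.range p))
      (LinearMap.ker (hankel (σ ∘ₗ (span ℝ (Set.range p)).subtype ∘ₗ normalForm hc h1))) :=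
    hker ▸ LinearMap.isCompl_of_proj fun v =>
      Subtype.ext (hp.normalForm_of_mem hc h1 hspan hB v.2)
  refine ⟨σ ∘ₗ (span ℝ (Set.range p)).subtype ∘ₗ normalForm hc h1,
    fun α hα => hp.map_normalForm_monomial_of_mem_mulSet hc h1 hspan hB hWW hα, ?_,
    hspan ▸ hcompl, hcompl, hker.trans (hp.ker_normalForm hc h1 hspan hB), fun k i => ?_⟩
  · rw [LinearMap.rank_eq_of_isCompl_ker _ hcompl, hspan, rank_spanMon]
  · rw [hker, hp.ker_normalForm hc h1 hspan hB, ← orthProj_apply]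
    exact span_le_restrictScalars ℝ _ _
      (hp.X_mul_sub_orthProj_mem hspan k (subset_span ⟨i, rfl⟩))
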